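/- Let (X,d) be a finite metric space, h a chaining functional of log-concave type, and ν a probability measure on X. Then there exists a nonempty set S ⊆ {x ∈ X : ν(x) > 0} such that Σ_{x∈X} ν(x)·∫₀^∞ h(ν(B(x,r))) dr ≤ min_{x∈S} ∫₀^∞ h(ν_S(B(x,r))) dr + diam(X), where ν_S is the conditional probability measure ν_S(A) := ν(A ∩ S)/ν(S) for A ⊆ X. -/

import Mathlib

open MeasureTheory

noncomputable section

/-- `f` is log-concave on `[0,∞)`. -/
def IsLogConcaveOn (f : ℝ → ℝ) : Prop :=
  ∀ x ∈ Set.Ici (0:ℝ), ∀ y ∈ Set.Ici (0:ℝ), ∀ t ∈ Set.Icc (0:ℝ) 1,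
    f x ^ t * f y ^ (1 - t) ≤ f (t * x + (1 - t) * y)

/-- `f` is a continuous, non-increasing, log-concave probability density on `[0,∞)`
normalized so that `f 0 = 1`. -/
structure IsChainingDensity (f : ℝ → ℝ) : Prop where
  nonneg : ∀ t : ℝ, 0 ≤ t → 0 ≤ f t
  continuousOn : ContinuousOn f (Set.Ici 0)
  antitoneOn : AntitoneOn f (Set.Ici 0)
  logConcave : IsLogConcaveOn f
  total : (∫ t in Set.Ioi (0:ℝ), f t) = 1
  normalized : f 0 = 1

/-- The complementary cumulative distribution function `F(s) = ∫_s^∞ f(t) dt`. -/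
def ccdf (f : ℝ → ℝ) (s : ℝ) : ℝ := ∫ t in Set.Ioi s, f t

/-- The chaining functional `h(p) = F⁻¹(p)`, defined on `(0,1]` as the least
`s ≥ 0` with `F(s) ≤ p`. -/
def chainFn (f : ℝ → ℝ) (p : ℝ) : ℝ := sInf {s : ℝ | 0 ≤ s ∧ ccdf f s ≤ p}

open scoped ENNReal

/-- The extended (`[0,∞]`-valued) chaining functional: `h(p)` is the least `s ≥ 0`
with `F(s) ≤ p`, and `+∞` when no such `s` exists (in particular
`h(0) = lim_{p→0⁺} h(p) ∈ (0,∞]`). -/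
def chainFnE (f : ℝ → ℝ) (p : ℝ) : ℝ≥0∞ :=
  sInf {t : ℝ≥0∞ | ∃ s : ℝ, 0 ≤ s ∧ ccdf f s ≤ p ∧ t = ENNReal.ofReal s}

/-- A probability measure on a finite set, given by its point masses. -/
def IsProbOn {X : Type*} [Fintype X] (μ : X → ℝ) : Prop :=
  (∀ x, 0 ≤ μ x) ∧ (∑ x, μ x) = 1

/-- The mass `μ(B(x,r))` of the closed ball of radius `r` around `x`. -/
def ballMass {X : Type*} [MetricSpace X] [Fintype X] (μ : X → ℝ) (x : X) (r : ℝ) : ℝ :=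
  ∑ y ∈ Finset.univ.filter (fun y => dist x y ≤ r), μ y

/-- `∫₀^∞ h(μ(B(x,r))) dr`, valued in `[0,∞]`. -/
def Hint {X : Type*} [MetricSpace X] [Fintype X] (f : ℝ → ℝ) (μ : X → ℝ) (x : X) : ℝ≥0∞ :=
  ∫⁻ r in Set.Ioi (0:ℝ), chainFnE f (ballMass μ x r)

/-- The diameter of the finite metric space `X`. -/
def fdiam (X : Type*) [MetricSpace X] : ℝ := Metric.diam (Set.univ : Set X)

/-- The conditional probability measure `ν_S` of `ν` on a subset `S`. -/
def condMeasure {X : Type*} [Fintype X] (ν : X → ℝ) (S : Finset X) : X → ℝ :=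
  fun x => letI := Classical.decEq X; if x ∈ S then ν x / (∑ y ∈ S, ν y) else 0


/-!
Write `w x = ∫₀^∞ h(ν(B(x,r))) dr`, `M = ∑ₓ ν(x) w(x)` and `D = diam X`; since `h(1) = 0`,
`w x` is an integral over `(0, D]`. Log-concavity and `f(0) = 1` make the hazard rate `f / F`
at least `1` and non-decreasing, so `F(s) ≤ e^{-s}` and `F(s + t) ≤ F(s) F(t)`, i.e.
`h(pq) ≤ h(p) + h(q)`. For `S ⊆ X` with `q = ν(S)` we have `ν(B(x,r)) ≥ q ν_S(B(x,r))`, hence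
`w x ≤ ∫₀^∞ h(ν_S(B(x,r))) dr + D h(q)`. It therefore suffices to find a level set
`S_t = {w > t}` with `M + D h(ν(S_t)) ≤ t + D`. If there were none, then
`ν(S_t) < F((t - M + D) / D) ≤ e^{-(t - M + D) / D}` for all `t > M - D`, and the layer-cake
formula would give `M = ∫₀^∞ ν(S_t) dt < (M - D) + D`.
-/

open Set

theorem chainFnE_le_ofReal {f : ℝ → ℝ} {p s : ℝ} (hs : 0 ≤ s) (h : ccdf f s ≤ p) :
    chainFnE f p ≤ ENNReal.ofReal s :=
  sInf_le ⟨s, hs, h, rfl⟩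

theorem chainFnE_antitone (f : ℝ → ℝ) : Antitone (chainFnE f) :=
  fun _ _ hpq => sInf_le_sInf fun _ ⟨s, hs, h, ht⟩ => ⟨s, hs, h.trans hpq, ht⟩

namespace IsChainingDensity

variable {f : ℝ → ℝ}

theorem integrableOn_Ioi (hf : IsChainingDensity f) {s : ℝ} (hs : 0 ≤ s) :
    IntegrableOn f (Ioi s) := by
  have h0 : IntegrableOn f (Ioi 0) := by
    by_contra h
    simpa [integral_undef h] using hf.total
  exact h0.mono_set (Ioi_subset_Ioi hs)

theorem ccdf_zero (hf : IsChainingDensity f) : ccdf f 0 = 1 := hf.total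

theorem ccdf_nonneg (hf : IsChainingDensity f) {s : ℝ} (hs : 0 ≤ s) : 0 ≤ ccdf f s :=
  setIntegral_nonneg measurableSet_Ioi fun t ht => hf.nonneg t (hs.trans ht.le)

theorem le_one (hf : IsChainingDensity f) {s : ℝ} (hs : 0 ≤ s) : f s ≤ 1 :=
  hf.normalized ▸ hf.antitoneOn self_mem_Ici hs hs

theorem ccdf_eq_integral_Ioc_add (hf : IsChainingDensity f) {s t : ℝ} (hs : 0 ≤ s)
    (hst : s ≤ t) : ccdf f s = (∫ u in Ioc s t, f u) + ccdf f t := by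
  rw [ccdf, ccdf, ← setIntegral_union (Ioc_disjoint_Ioi le_rfl) measurableSet_Ioi
    ((hf.integrableOn_Ioi hs).mono_set Ioc_subset_Ioi_self) (hf.integrableOn_Ioi (hs.trans hst)),
    Ioc_union_Ioi_eq_Ioi hst]

theorem ccdf_sub_ccdf_mem_Icc (hf : IsChainingDensity f) {s t : ℝ} (hs : 0 ≤ s)
    (hst : s ≤ t) : ccdf f s - ccdf f t ∈ Icc 0 (t - s) := by
  rw [hf.ccdf_eq_integral_Ioc_add hs hst, add_sub_cancel_right]
  refine ⟨setIntegral_nonneg measurableSet_Ioc fun u hu => hf.nonneg u (hs.trans hu.1.le), ?_⟩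
  have h := norm_setIntegral_le_of_norm_le_const (f := f) (C := 1)
      (measure_Ioc_lt_top (a := s) (b := t) (μ := volume))
    fun u hu => by
      rw [Real.norm_of_nonneg (hf.nonneg u (hs.trans hu.1.le))]
      exact hf.le_one (hs.trans hu.1.le)
  rw [Real.volume_real_Ioc_of_le hst, one_mul] at h
  exact (le_abs_self _).trans h

theorem ccdf_antitoneOn (hf : IsChainingDensity f) : AntitoneOn (ccdf f) (Ici 0) :=
  fun _ hs _ _ hst => sub_nonneg.1 (hf.ccdf_sub_ccdf_mem_Icc hs hst).1

theorem lipschitzOnWith_ccdf (hf : IsChainingDensity f) : LipschitzOnWith 1 (ccdf f) (Ici 0) := by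
  refine LipschitzOnWith.of_dist_le_mul fun s hs t ht => ?_
  wlog hst : s ≤ t generalizing s t
  · rw [dist_comm, dist_comm s]; exact this t ht s hs (le_of_not_ge hst)
  have h := hf.ccdf_sub_ccdf_mem_Icc hs hst
  rw [NNReal.coe_one, one_mul, Real.dist_eq, Real.dist_eq, abs_of_nonneg h.1,
    abs_of_nonpos (sub_nonpos.2 hst)]
  linarith [h.2]

theorem continuousOn_ccdf (hf : IsChainingDensity f) : ContinuousOn (ccdf f) (Ici 0) :=
  hf.lipschitzOnWith_ccdf.continuousOn

theorem hasDerivAt_ccdf (hf : IsChainingDensity f) {s : ℝ} (hs : 0 < s) :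
    HasDerivAt (ccdf f) (-f s) s := by
  have hprim : HasDerivAt (fun u => ∫ t in (0:ℝ)..u, f t) (f s) s := by
    refine intervalIntegral.integral_hasDerivAt_right ?_ ?_ ?_
    · rw [intervalIntegrable_iff_integrableOn_Ioc_of_le hs.le]
      exact (hf.integrableOn_Ioi le_rfl).mono_set Ioc_subset_Ioi_self
    · exact ⟨Ioi 0, Ioi_mem_nhds hs,
        (hf.continuousOn.mono Ioi_subset_Ici_self).aestronglyMeasurable measurableSet_Ioi⟩
    · exact hf.continuousOn.continuousAt (Filter.mem_of_superset (Ioi_mem_nhds hs)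
        Ioi_subset_Ici_self)
  refine (hprim.const_sub 1).congr_of_eventuallyEq ?_
  filter_upwards [Ioi_mem_nhds hs] with u hu
  rw [← hf.ccdf_zero, hf.ccdf_eq_integral_Ioc_add le_rfl hu.le,
    intervalIntegral.integral_of_le hu.le, add_sub_cancel_left]

theorem mul_le_mul_of_add_eq (hf : IsChainingDensity f) {x x' y' y : ℝ} (hx : 0 ≤ x)
    (hxx' : x ≤ x') (hx'y' : x' ≤ y') (hy'y : y' ≤ y) (hsum : x + y = x' + y') :
    f x * f y ≤ f x' * f y' := by
  rcases hxx'.eq_or_lt with rfl | hlt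
  · rw [show y = y' by linarith]
  have hyx : 0 < y - x := by linarith
  set θ := (y - x') / (y - x)
  have hθ : θ ∈ Icc (0:ℝ) 1 :=
    ⟨div_nonneg (by linarith) hyx.le, (div_le_one hyx).2 (by linarith)⟩
  have hx' : θ * x + (1 - θ) * y = x' := by
    simp only [θ]; field_simp; ring
  have hy' : (1 - θ) * x + (1 - (1 - θ)) * y = y' := by
    rw [show y' = x + y - x' by linarith]; simp only [θ]; field_simp; ring
  have hy : y ∈ Ici (0:ℝ) := mem_Ici.2 (by linarith)
  have h₁ := hf.logConcave x hx y hy θ hθ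
  have h₂ := hf.logConcave x hx y hy (1 - θ) ⟨by linarith [hθ.2], by linarith [hθ.1]⟩
  rw [hx'] at h₁
  rw [hy'] at h₂
  have hfx := hf.nonneg x hx
  have hfy := hf.nonneg y hy
  calc f x * f y = (f x ^ θ * f y ^ (1 - θ)) * (f x ^ (1 - θ) * f y ^ (1 - (1 - θ))) := by
        rw [mul_mul_mul_comm, ← Real.rpow_add' hfx (by norm_num),
          ← Real.rpow_add' hfy (by norm_num)]
        norm_num
    _ ≤ f x' * f y' :=
        mul_le_mul h₁ h₂ (mul_nonneg (Real.rpow_nonneg hfx _) (Real.rpow_nonneg hfy _))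
          (hf.nonneg x' (hx.trans hxx'))

/-- The hazard rate `f / F` of a log-concave density is non-decreasing. -/
theorem mul_ccdf_le_mul_ccdf (hf : IsChainingDensity f) {s t : ℝ} (hs : 0 ≤ s) (hst : s ≤ t) :
    f s * ccdf f t ≤ f t * ccdf f s := by
  set c := t - s
  have hshift := measurePreserving_sub_right volume c
  have hemb := measurableEmbedding_subRight c
  have hpre : (fun u => u - c) ⁻¹' Ioi s = Ioi t := by
    ext u; simp only [mem_preimage, mem_Ioi, c]; constructor <;> intro <;> linarith
  have hint : IntegrableOn (fun u => f (u - c)) (Ioi t) := by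
    rw [← hpre]; exact (hshift.integrableOn_comp_preimage hemb).2 (hf.integrableOn_Ioi hs)
  have heq : ∫ u in Ioi t, f (u - c) = ccdf f s := by
    rw [← hpre]; exact hshift.setIntegral_preimage_emb hemb f (Ioi s)
  calc f s * ccdf f t = ∫ u in Ioi t, f s * f u := (integral_const_mul _ _).symm
    _ ≤ ∫ u in Ioi t, f t * f (u - c) := by
        refine setIntegral_mono_on ((hf.integrableOn_Ioi (hs.trans hst)).const_mul _)
          (hint.const_mul _) measurableSet_Ioi fun u hu => ?_
        rw [mem_Ioi] at hu
        rcases le_total (u - c) t with h | h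
        · rw [mul_comm (f t)]
          exact hf.mul_le_mul_of_add_eq hs (by linarith) h hu.le (by ring)
        · exact hf.mul_le_mul_of_add_eq hs hst h (by linarith) (by ring)
    _ = f t * ccdf f s := by rw [integral_const_mul, heq]

theorem ccdf_le (hf : IsChainingDensity f) {s : ℝ} (hs : 0 ≤ s) : ccdf f s ≤ f s := by
  simpa [hf.normalized, hf.ccdf_zero] using hf.mul_ccdf_le_mul_ccdf le_rfl hs

theorem ccdf_le_exp_neg (hf : IsChainingDensity f) {s : ℝ} (hs : 0 ≤ s) :
    ccdf f s ≤ Real.exp (-s) := by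
  have hanti : AntitoneOn (fun u => Real.exp u * ccdf f u) (Ici 0) := by
    refine antitoneOn_of_hasDerivWithinAt_nonpos (convex_Ici 0)
      (f' := fun u => Real.exp u * ccdf f u + Real.exp u * -f u)
      (Real.continuous_exp.continuousOn.mul hf.continuousOn_ccdf) (fun u hu => ?_) fun u hu => ?_
    · rw [interior_Ici] at hu
      exact ((Real.hasDerivAt_exp u).mul (hf.hasDerivAt_ccdf hu)).hasDerivWithinAt
    · rw [interior_Ici] at hu
      have := hf.ccdf_le hu.le
      nlinarith [Real.exp_pos u]
  have h := hanti self_mem_Ici hs hs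
  dsimp only at h
  rw [Real.exp_zero, one_mul, hf.ccdf_zero, mul_comm, ← le_div_iff₀ (Real.exp_pos s)] at h
  rwa [Real.exp_neg, ← one_div]

theorem ccdf_add_le_mul (hf : IsChainingDensity f) {s t : ℝ} (hs : 0 ≤ s) (ht : 0 ≤ t) :
    ccdf f (s + t) ≤ ccdf f s * ccdf f t := by
  rcases (hf.ccdf_nonneg hs).eq_or_lt with hFs | hFs
  · rw [← hFs, zero_mul]
    exact hFs ▸ hf.ccdf_antitoneOn hs (add_nonneg hs ht) (le_add_of_nonneg_right ht)
  have hpos : ∀ u ∈ Icc 0 s, 0 < ccdf f u :=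
    fun u hu => hFs.trans_le (hf.ccdf_antitoneOn hu.1 hs hu.2)
  have hshift : ∀ u ∈ Ioo 0 s, HasDerivAt (fun u => ccdf f (u + t)) (-f (u + t)) u :=
    fun u hu => (hf.hasDerivAt_ccdf (by linarith [hu.1])).comp_add_const u t
  have hanti : AntitoneOn (fun u => ccdf f (u + t) / ccdf f u) (Icc 0 s) := by
    refine antitoneOn_of_hasDerivWithinAt_nonpos (convex_Icc 0 s)
      (f' := fun u => (-f (u + t) * ccdf f u - ccdf f (u + t) * -f u) / ccdf f u ^ 2) ?_
      (fun u hu => ?_)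
      fun u hu => ?_
    · refine ContinuousOn.div ?_ (hf.continuousOn_ccdf.mono Icc_subset_Ici_self)
        fun u hu => (hpos u hu).ne'
      exact hf.continuousOn_ccdf.comp (continuous_add_const t).continuousOn
        fun u hu => add_nonneg hu.1 ht
    · rw [interior_Icc] at hu
      exact ((hshift u hu).div (hf.hasDerivAt_ccdf hu.1)
        (hpos u (Ioo_subset_Icc_self hu)).ne').hasDerivWithinAt
    · rw [interior_Icc] at hu
      have := hf.mul_ccdf_le_mul_ccdf hu.1.le (le_add_of_nonneg_right ht)
      exact div_nonpos_of_nonpos_of_nonneg (by linarith) (sq_nonneg _)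
  have h := hanti (left_mem_Icc.2 hs) (right_mem_Icc.2 hs) hs
  dsimp only at h
  rwa [zero_add, hf.ccdf_zero, div_one, div_le_iff₀ hFs, mul_comm] at h

theorem chainFnE_eq_zero_of_one_le (hf : IsChainingDensity f) {p : ℝ} (hp : 1 ≤ p) :
    chainFnE f p = 0 := by
  simpa using chainFnE_le_ofReal le_rfl (hf.ccdf_zero.trans_le hp)

theorem chainFnE_ne_top (hf : IsChainingDensity f) {p : ℝ} (hp : 0 < p) :
    chainFnE f p ≠ ⊤ := by
  set s := max 0 (-Real.log p)
  have hs : 0 ≤ s := le_max_left _ _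
  refine ne_top_of_le_ne_top ENNReal.ofReal_ne_top (chainFnE_le_ofReal hs ?_)
  calc ccdf f s ≤ Real.exp (-s) := hf.ccdf_le_exp_neg hs
    _ ≤ Real.exp (Real.log p) := Real.exp_le_exp.2 (by linarith [le_max_right 0 (-Real.log p)])
    _ = p := Real.exp_log hp

theorem chainFnE_mul_le_add (hf : IsChainingDensity f) (p q : ℝ) :
    chainFnE f (p * q) ≤ chainFnE f p + chainFnE f q := by
  conv_rhs => rw [chainFnE, chainFnE, ENNReal.sInf_add]
  refine le_iInf₂ fun _ ⟨s, hs, hsp, hb⟩ => ?_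
  rw [ENNReal.add_sInf]
  refine le_iInf₂ fun _ ⟨s', hs', hs'q, hc⟩ => ?_
  rw [hb, hc, ← ENNReal.ofReal_add hs hs']
  refine chainFnE_le_ofReal (add_nonneg hs hs') ((hf.ccdf_add_le_mul hs hs').trans ?_)
  exact mul_le_mul hsp hs'q (hf.ccdf_nonneg hs') ((hf.ccdf_nonneg hs).trans hsp)

end IsChainingDensity

theorem volume_setOf_ofReal_lt_inter_Ioi (a : ℝ≥0∞) :
    volume ({t : ℝ | ENNReal.ofReal t < a} ∩ Ioi 0) = a := by
  rcases eq_or_ne a ⊤ with rfl | ha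
  · simp [ENNReal.ofReal_lt_top]
  · have he : {t : ℝ | ENNReal.ofReal t < a} ∩ Ioi 0 = Ioo 0 a.toReal := by
      ext t
      simp only [mem_inter_iff, mem_ofPred_eq, mem_Ioi, mem_Ioo]
      constructor
      · rintro ⟨h1, h2⟩; exact ⟨h2, (ENNReal.ofReal_lt_iff_lt_toReal h2.le ha).1 h1⟩
      · rintro ⟨h1, h2⟩; exact ⟨(ENNReal.ofReal_lt_iff_lt_toReal h1.le ha).2 h2, h1⟩
    rw [he, Real.volume_Ioo, sub_zero, ENNReal.ofReal_toReal ha]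

theorem lintegral_Ioi_ofReal_exp_neg_div (a : ℝ) {D : ℝ} (hD : 0 < D) :
    ∫⁻ t in Ioi a, ENNReal.ofReal (Real.exp (-((t - a) / D))) = ENNReal.ofReal D := by
  have hb : -D⁻¹ < 0 := neg_lt_zero.2 (inv_pos.2 hD)
  have hexp : ∀ t, Real.exp (-((t - a) / D)) = Real.exp (a / D) * Real.exp (-D⁻¹ * t) := by
    intro t; rw [← Real.exp_add]; ring_nf
  simp_rw [hexp]
  rw [← ofReal_integral_eq_lintegral_ofReal ((integrableOn_exp_mul_Ioi hb a).const_mul _)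
    (ae_of_all _ fun t => by positivity), integral_const_mul, integral_exp_mul_Ioi hb a,
    neg_div, div_neg, neg_neg, mul_div_assoc', ← Real.exp_add]
  congr 1
  field_simp
  simp

theorem setLIntegral_Ioi_lt_of_lt_exp {G : ℝ → ℝ≥0∞} {a D : ℝ} (ha : 0 ≤ a) (hD : 0 < D)
    (hG₁ : ∀ t, G t ≤ 1)
    (hG : ∀ t, a < t → G t < ENNReal.ofReal (Real.exp (-((t - a) / D)))) :
    ∫⁻ t in Ioi 0, G t < ENNReal.ofReal (a + D) := by
  have hle : ∫⁻ t in Ioc 0 a, G t ≤ ENNReal.ofReal a := by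
    calc _ ≤ ∫⁻ _ in Ioc 0 a, 1 := setLIntegral_mono' measurableSet_Ioc fun t _ => hG₁ t
      _ = _ := by rw [setLIntegral_one, Real.volume_Ioc, sub_zero]
  have hexp := lintegral_Ioi_ofReal_exp_neg_div a hD
  have hlt : ∫⁻ t in Ioi a, G t < ENNReal.ofReal D := by
    rw [← hexp]
    refine setLIntegral_strict_mono measurableSet_Ioi (by simp) (by fun_prop) ?_
      (ae_of_all _ hG)
    exact ne_top_of_le_ne_top (hexp ▸ ENNReal.ofReal_ne_top)
      (setLIntegral_mono' measurableSet_Ioi fun t ht => (hG t ht).le)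
  rw [← Ioc_union_Ioi_eq_Ioi ha, lintegral_union measurableSet_Ioi (Ioc_disjoint_Ioi le_rfl),
    ENNReal.ofReal_add ha hD.le]
  exact ENNReal.add_lt_add_of_le_of_lt (ne_top_of_le_ne_top ENNReal.ofReal_ne_top hle) hle hlt

section FiniteSpace

variable {X : Type*} [Fintype X]

theorem sum_mul_condMeasure_le {ν : X → ℝ} (hν : ∀ y, 0 ≤ ν y) (S : Finset X) (y : X) :
    (∑ x ∈ S, ν x) * condMeasure ν S y ≤ ν y := by
  simp only [condMeasure]
  split_ifs
  · rcases eq_or_ne (∑ x ∈ S, ν x) 0 with h | h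
    · rw [h, zero_mul]; exact hν y
    · rw [mul_div_cancel₀ _ h]
  · rw [mul_zero]; exact hν y

def levelSet (ν : X → ℝ) (w : X → ℝ≥0∞) (t : ℝ) : Finset X :=
  {x | 0 < ν x ∧ ENNReal.ofReal t < w x}

theorem mem_levelSet {ν : X → ℝ} {w : X → ℝ≥0∞} {t : ℝ} {x : X} :
    x ∈ levelSet ν w t ↔ 0 < ν x ∧ ENNReal.ofReal t < w x := by
  simp [levelSet]

theorem sum_ofReal_mul_eq_lintegral_levelSet {ν : X → ℝ} (hν : ∀ y, 0 ≤ ν y)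
    (w : X → ℝ≥0∞) :
    ∑ x, ENNReal.ofReal (ν x) * w x =
      ∫⁻ t in Ioi 0, ENNReal.ofReal (∑ x ∈ levelSet ν w t, ν x) := by
  have hmeas : ∀ x, MeasurableSet {t : ℝ | ENNReal.ofReal t < w x} :=
    fun x => measurableSet_lt ENNReal.measurable_ofReal measurable_const
  have hterm : ∀ x, ENNReal.ofReal (ν x) * w x = ∫⁻ t in Ioi 0,
      {t : ℝ | ENNReal.ofReal t < w x}.indicator (fun _ => ENNReal.ofReal (ν x)) t := by
    intro x
    rw [lintegral_indicator_const (hmeas x), Measure.restrict_apply (hmeas x),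
      volume_setOf_ofReal_lt_inter_Ioi]
  rw [Finset.sum_congr rfl fun x _ => hterm x,
    ← lintegral_finsetSum _ fun x _ => measurable_const.indicator (hmeas x)]
  refine lintegral_congr fun t => ?_
  rw [ENNReal.ofReal_sum_of_nonneg fun x _ => hν x, levelSet, Finset.sum_filter]
  refine Finset.sum_congr rfl fun x _ => ?_
  rcases (hν x).eq_or_lt with h0 | hpos
  · simp [← h0]
  · simp [indicator_apply, hpos]

theorem exists_levelSet_add_le {f : ℝ → ℝ} (hf : IsChainingDensity f)
    {ν : X → ℝ} (hν : IsProbOn ν) (w : X → ℝ≥0∞) {D : ℝ} (hD : 0 < D)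
    (hM : ∑ x, ENNReal.ofReal (ν x) * w x ≠ ⊤)
    (hDM : ENNReal.ofReal D ≤ ∑ x, ENNReal.ofReal (ν x) * w x) :
    ∃ t : ℝ, (levelSet ν w t).Nonempty ∧
      ∑ x, ENNReal.ofReal (ν x) * w x + chainFnE f (∑ x ∈ levelSet ν w t, ν x) * ENNReal.ofReal D
        ≤ ENNReal.ofReal t + ENNReal.ofReal D := by
  set M := ∑ x, ENNReal.ofReal (ν x) * w x
  set a := M.toReal - D
  have ha : 0 ≤ a := sub_nonneg.2 ((ENNReal.ofReal_le_iff_le_toReal hM).1 hDM)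
  have hMa : M = ENNReal.ofReal (a + D) := by rw [sub_add_cancel, ENNReal.ofReal_toReal hM]
  by_contra! H
  have htail : ∀ t, a < t → ENNReal.ofReal (∑ x ∈ levelSet ν w t, ν x) <
      ENNReal.ofReal (Real.exp (-((t - a) / D))) := by
    intro t hat
    rcases (levelSet ν w t).eq_empty_or_nonempty with hS | hS
    · simp [hS, Real.exp_pos]
    rw [ENNReal.ofReal_lt_ofReal_iff (Real.exp_pos _)]
    by_contra! hle
    have hst : 0 ≤ (t - a) / D := div_nonneg (by linarith) hD.le
    have hh := chainFnE_le_ofReal hst ((hf.ccdf_le_exp_neg hst).trans hle)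
    refine (H t hS).not_ge ?_
    calc M + chainFnE f (∑ x ∈ levelSet ν w t, ν x) * ENNReal.ofReal D
        ≤ ENNReal.ofReal (a + D) + ENNReal.ofReal ((t - a) / D) * ENNReal.ofReal D := by
          rw [hMa]; gcongr
      _ = ENNReal.ofReal t + ENNReal.ofReal D := by
          rw [← ENNReal.ofReal_mul hst, div_mul_cancel₀ _ hD.ne',
            ← ENNReal.ofReal_add (by linarith) (by linarith),
            ← ENNReal.ofReal_add (by linarith) hD.le]
          ring_nf
  have hle₁ : ∀ t, ENNReal.ofReal (∑ x ∈ levelSet ν w t, ν x) ≤ 1 := fun t =>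
    ENNReal.ofReal_le_one.2 (hν.2 ▸ Finset.sum_le_univ_sum_of_nonneg hν.1)
  have := setLIntegral_Ioi_lt_of_lt_exp ha hD hle₁ htail
  rw [← sum_ofReal_mul_eq_lintegral_levelSet hν.1, ← hMa] at this
  exact this.false

end FiniteSpace

theorem fdiam_nonneg (X : Type*) [MetricSpace X] : 0 ≤ fdiam X := Metric.diam_nonneg

section FiniteMetricSpace

variable {X : Type*} [MetricSpace X] [Fintype X] {f : ℝ → ℝ}

theorem ballMass_of_fdiam_le (μ : X → ℝ) (x : X) {r : ℝ} (hr : fdiam X ≤ r) :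
    ballMass μ x r = ∑ y, μ y := by
  rw [ballMass, Finset.filter_true_of_mem fun y _ =>
    (Metric.dist_le_diam_of_mem finite_univ.isBounded (mem_univ x) (mem_univ y)).trans hr]

theorem le_ballMass {μ : X → ℝ} (hμ : ∀ y, 0 ≤ μ y) (x : X) {r : ℝ} (hr : 0 ≤ r) :
    μ x ≤ ballMass μ x r :=
  Finset.single_le_sum (fun y _ => hμ y) (by simpa using hr)

theorem mul_ballMass_le {μ ν : X → ℝ} {q : ℝ} (h : ∀ y, q * μ y ≤ ν y)
    (x : X) (r : ℝ) : q * ballMass μ x r ≤ ballMass ν x r := by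
  rw [ballMass, ballMass, Finset.mul_sum]
  exact Finset.sum_le_sum fun y _ => h y

theorem Hint_eq_setLIntegral_Ioc (hf : IsChainingDensity f) {μ : X → ℝ} (hμ : ∑ y, μ y = 1)
    (x : X) : Hint f μ x = ∫⁻ r in Ioc 0 (fdiam X), chainFnE f (ballMass μ x r) := by
  have hvanish : ∀ r ∈ Ioi (fdiam X), chainFnE f (ballMass μ x r) = 0 := fun r hr => by
    rw [ballMass_of_fdiam_le μ x hr.le, hμ, hf.chainFnE_eq_zero_of_one_le le_rfl]
  rw [Hint, ← Ioc_union_Ioi_eq_Ioi (fdiam_nonneg X),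
    lintegral_union measurableSet_Ioi (Ioc_disjoint_Ioi le_rfl),
    setLIntegral_congr_fun measurableSet_Ioi hvanish, lintegral_zero, add_zero]

theorem Hint_le_mul_fdiam (hf : IsChainingDensity f) {μ : X → ℝ} (hμ : IsProbOn μ) (x : X) :
    Hint f μ x ≤ chainFnE f (μ x) * ENNReal.ofReal (fdiam X) := by
  rw [Hint_eq_setLIntegral_Ioc hf hμ.2]
  calc _ ≤ ∫⁻ _ in Ioc 0 (fdiam X), chainFnE f (μ x) :=
        setLIntegral_mono' measurableSet_Ioc fun r hr =>
          chainFnE_antitone f (le_ballMass hμ.1 x hr.1.le)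
    _ = _ := by rw [setLIntegral_const, Real.volume_Ioc, sub_zero]

theorem Hint_le_add (hf : IsChainingDensity f) {μ ν : X → ℝ} (hν : ∑ y, ν y = 1) {q : ℝ}
    (h : ∀ y, q * μ y ≤ ν y) (x : X) :
    Hint f ν x ≤ Hint f μ x + chainFnE f q * ENNReal.ofReal (fdiam X) := by
  rw [Hint_eq_setLIntegral_Ioc hf hν]
  calc _ ≤ ∫⁻ r in Ioc 0 (fdiam X), chainFnE f (ballMass μ x r) + chainFnE f q :=
        setLIntegral_mono' measurableSet_Ioc fun r _ =>
          (chainFnE_antitone f (mul_ballMass_le h x r)).trans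
            ((hf.chainFnE_mul_le_add q _).trans_eq (add_comm _ _))
    _ = (∫⁻ r in Ioc 0 (fdiam X), chainFnE f (ballMass μ x r)) +
          chainFnE f q * ENNReal.ofReal (fdiam X) := by
        rw [lintegral_add_right _ measurable_const, setLIntegral_const, Real.volume_Ioc, sub_zero]
    _ ≤ _ := by gcongr; exact lintegral_mono_set Ioc_subset_Ioi_self

theorem sum_ofReal_mul_Hint_ne_top (hf : IsChainingDensity f) {ν : X → ℝ} (hν : IsProbOn ν) :
    ∑ x, ENNReal.ofReal (ν x) * Hint f ν x ≠ ⊤ := by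
  refine ENNReal.sum_ne_top.2 fun x _ => ?_
  rcases (hν.1 x).eq_or_lt with h0 | hpos
  · simp [← h0]
  · exact ENNReal.mul_ne_top ENNReal.ofReal_ne_top (ne_top_of_le_ne_top
      (ENNReal.mul_ne_top (hf.chainFnE_ne_top hpos) ENNReal.ofReal_ne_top)
      (Hint_le_mul_fdiam hf hν x))

end FiniteMetricSpace

/-- for every probability measure `ν` on a finite metric space `X`,
there is a nonempty `S ⊆ {x : ν(x) > 0}` with
`Σ_x ν(x)·∫₀^∞ h(ν(B(x,r))) dr ≤ min_{x∈S} ∫₀^∞ h(ν_S(B(x,r))) dr + diam(X)`. -/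
theorem stmt5 {X : Type*} [MetricSpace X] [Fintype X]
    (f : ℝ → ℝ) (hf : IsChainingDensity f) (ν : X → ℝ) (hν : IsProbOn ν) :
    ∃ S : Finset X, S.Nonempty ∧ (∀ x ∈ S, 0 < ν x) ∧
      (∑ x, ENNReal.ofReal (ν x) * Hint f ν x) ≤
        (⨅ x ∈ S, Hint f (condMeasure ν S) x) + ENNReal.ofReal (fdiam X) := by
  obtain ⟨x₀, hx₀⟩ : ∃ x, 0 < ν x := by
    by_contra! h
    simpa [fun x => le_antisymm (h x) (hν.1 x)] using hν.2
  rcases le_or_gt (∑ x, ENNReal.ofReal (ν x) * Hint f ν x) (ENNReal.ofReal (fdiam X))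
    with hMD | hDM
  · exact ⟨{x₀}, Finset.singleton_nonempty x₀, by simpa using hx₀, le_add_left hMD⟩
  have hD : 0 < fdiam X := (fdiam_nonneg X).lt_of_ne fun h0 => by
    simp [Hint_eq_setLIntegral_Ioc hf hν.2, ← h0] at hDM
  obtain ⟨t, hne, ht⟩ := exists_levelSet_add_le hf hν (Hint f ν) hD
    (sum_ofReal_mul_Hint_ne_top hf hν) hDM.le
  set S := levelSet ν (Hint f ν) t
  have hq : chainFnE f (∑ x ∈ S, ν x) * ENNReal.ofReal (fdiam X) ≠ ⊤ :=
    ENNReal.mul_ne_top (hf.chainFnE_ne_top (Finset.sum_pos (fun x hx => (mem_levelSet.1 hx).1) hne))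
      ENNReal.ofReal_ne_top
  refine ⟨S, hne, fun x hx => (mem_levelSet.1 hx).1, ?_⟩
  simp only [ENNReal.iInf_add]
  refine le_iInf₂ fun x hx => (ENNReal.add_le_add_iff_right hq).1 ?_
  calc _ ≤ ENNReal.ofReal t + ENNReal.ofReal (fdiam X) := ht
    _ ≤ Hint f ν x + ENNReal.ofReal (fdiam X) := by gcongr; exact (mem_levelSet.1 hx).2.le
    _ ≤ Hint f (condMeasure ν S) x + chainFnE f (∑ x ∈ S, ν x) * ENNReal.ofReal (fdiam X)
          + ENNReal.ofReal (fdiam X) := by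
        gcongr; exact Hint_le_add hf hν.2 (sum_mul_condMeasure_le hν.1 S) x
    _ = _ := add_right_comm _ _ _
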